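/- arXiv:2509.00196 — 2 statements merged into one kernel-verified Lean document; each statement's English description precedes it below -/
import Mathlib

section
/- Let B ∈ ℝ^{M×K}, A ∈ ℝ^{p×K}, Σ_Z ∈ ℝ^{K×K} symmetric positive definite, and suppose λ_min(B^T B) ≥ κ_{B,1}·M, λ_max(A^T A) ≤ κ_{A,2}·p, and λ_min(Σ_Z) ≥ κ_{Z,1} for positive constants κ_{B,1}, κ_{A,2}, κ_{Z,1}. Then the K-th largest eigenvalue of B(Σ_Z^{-1} + A^T A)^{-1}B^T is at least C·M/p, where C = κ_{B,1}/(κ_{A,2} + 1/(κ_{Z,1})) (for p ≥ 1). -/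
open Matrix

noncomputable def lmin {n : ℕ} {A : Matrix (Fin n) (Fin n) ℝ} (hA : A.IsHermitian) : ℝ :=
  ⨅ i, hA.eigenvalues i

noncomputable def lmax {n : ℕ} {A : Matrix (Fin n) (Fin n) ℝ} (hA : A.IsHermitian) : ℝ :=
  ⨆ i, hA.eigenvalues i

/-- `kthEig hA k` is the `k`-th largest eigenvalue (1-indexed) of the Hermitian
matrix `A`. -/
noncomputable def kthEig {n : ℕ} {A : Matrix (Fin n) (Fin n) ℝ} (hA : A.IsHermitian) (k : ℕ) : ℝ :=
  ((List.ofFn hA.eigenvalues).insertionSort (· ≥ ·)).getD (k - 1) 0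

/-!
Write `G = BᵀB` and `S = Σ_Z⁻¹ + AᵀA`. Expanding quadratic forms in an orthonormal eigenbasis,
the eigenvalue hypotheses say `G ≥ κ_{B,1} M` and `S ≤ t` with `t = (κ_{A,2} + 1/κ_{Z,1}) p` in
the sense of quadratic forms, so `B` is injective and `S⁻¹ ≥ t⁻¹`. At a vector `Bu` of the
`K`-dimensional range of `B`, the quadratic form of `B S⁻¹ Bᵀ` is
`(Gu)ᵀ S⁻¹ (Gu) ≥ t⁻¹ |Gu|² ≥ t⁻¹ κ_{B,1} M |Bu|²`, and the easy half of the Courant–Fischer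
principle turns this bound on a `K`-dimensional subspace into a bound on the `K`-th largest
eigenvalue.
-/

open Module InnerProductSpace WithLp
open scoped InnerProductSpace

namespace LinearMap.IsSymmetric

variable {𝕜 E : Type*} [RCLike 𝕜] [NormedAddCommGroup E] [InnerProductSpace 𝕜 E]
  [FiniteDimensional 𝕜 E] {T : E →ₗ[𝕜] E} (hT : T.IsSymmetric) {n : ℕ} (hn : finrank 𝕜 E = n)

theorem re_inner_apply_self_eq_sum (v : E) :
    RCLike.re ⟪T v, v⟫_𝕜 =
      ∑ j, hT.eigenvalues hn j * ‖⟪hT.eigenvectorBasis hn j, v⟫_𝕜‖ ^ 2 := by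
  set b := hT.eigenvectorBasis hn
  rw [← b.sum_inner_mul_inner, map_sum]
  refine Finset.sum_congr rfl fun j _ => ?_
  rw [hT, apply_eigenvectorBasis, inner_smul_right, ← inner_conj_symm v (b j), mul_assoc,
    RCLike.conj_mul, ← RCLike.ofReal_pow, ← RCLike.ofReal_mul, RCLike.ofReal_re]

theorem re_inner_apply_self_le {v : E} {t : ℝ}
    (ht : ∀ j, ⟪hT.eigenvectorBasis hn j, v⟫_𝕜 ≠ 0 → hT.eigenvalues hn j ≤ t) :
    RCLike.re ⟪T v, v⟫_𝕜 ≤ t * ‖v‖ ^ 2 := by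
  rw [hT.re_inner_apply_self_eq_sum hn, ← (hT.eigenvectorBasis hn).sum_sq_norm_inner_right,
    Finset.mul_sum]
  refine Finset.sum_le_sum fun j _ => ?_
  by_cases hj : ⟪hT.eigenvectorBasis hn j, v⟫_𝕜 = 0
  · simp [hj]
  · exact mul_le_mul_of_nonneg_right (ht j hj) (by positivity)

theorem le_re_inner_apply_self {s : ℝ} (hs : ∀ j, s ≤ hT.eigenvalues hn j) (v : E) :
    s * ‖v‖ ^ 2 ≤ RCLike.re ⟪T v, v⟫_𝕜 := by
  rw [hT.re_inner_apply_self_eq_sum hn, ← (hT.eigenvectorBasis hn).sum_sq_norm_inner_right,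
    Finset.mul_sum]
  exact Finset.sum_le_sum fun j _ => mul_le_mul_of_nonneg_right (hs j) (by positivity)

/-- The easy half of the Courant–Fischer min-max principle. -/
theorem le_eigenvalues_of_le_re_inner (V : Submodule 𝕜 E) {i : Fin n}
    (hi : (i : ℕ) < finrank 𝕜 V) {c : ℝ} (hc : ∀ v ∈ V, c * ‖v‖ ^ 2 ≤ RCLike.re ⟪T v, v⟫_𝕜) :
    c ≤ hT.eigenvalues hn i := by
  set b := hT.eigenvectorBasis hn
  set U := Submodule.span 𝕜 (Set.range fun j : Fin i => b (Fin.castLE i.2.le j))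
  have hU : finrank 𝕜 E ≤ i + finrank 𝕜 Uᗮ := by
    rw [← U.finrank_add_finrank_orthogonal]
    gcongr
    exact (finrank_range_le_card _).trans_eq (Fintype.card_fin _)
  obtain ⟨v, hvV, hvU, hv0⟩ : ∃ v ∈ V, v ∈ Uᗮ ∧ v ≠ 0 := by
    by_contra! h
    have := Submodule.finrank_add_finrank_le_of_disjoint (Submodule.disjoint_def.mpr h)
    omega
  have hle : RCLike.re ⟪T v, v⟫_𝕜 ≤ hT.eigenvalues hn i * ‖v‖ ^ 2 := by
    refine hT.re_inner_apply_self_le hn fun j hj => hT.eigenvalues_antitone hn ?_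
    by_contra! hji
    exact hj ((Submodule.mem_orthogonal _ v).mp hvU _ (Submodule.subset_span ⟨⟨j, hji⟩, rfl⟩))
  exact le_of_mul_le_mul_right ((hc v hvV).trans hle) (by positivity)

end LinearMap.IsSymmetric

namespace Matrix

variable {m : Type*} [Fintype m]

theorem mul_dotProduct_le_dotProduct_self {v w : m → ℝ} {s : ℝ} (hs : 0 ≤ s)
    (h : s * (v ⬝ᵥ v) ≤ v ⬝ᵥ w) : s * (v ⬝ᵥ w) ≤ w ⬝ᵥ w := by
  have hsq : 0 ≤ (s • v - w) ⬝ᵥ (s • v - w) := dotProduct_self_star_nonneg _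
  simp only [sub_dotProduct, dotProduct_sub, smul_dotProduct, dotProduct_smul, smul_eq_mul,
    dotProduct_comm w v] at hsq
  nlinarith

theorem mul_mul_dotProduct_le_dotProduct_mul_mul_transpose_mulVec {k : Type*} [Fintype k]
    (B : Matrix m k ℝ) {S : Matrix k k ℝ} {b r : ℝ} (hb : 0 ≤ b) (hr : 0 ≤ r)
    (hB : ∀ u, b * (u ⬝ᵥ u) ≤ u ⬝ᵥ ((Bᵀ * B) *ᵥ u))
    (hS : ∀ w, r * (w ⬝ᵥ w) ≤ w ⬝ᵥ (S *ᵥ w)) (u : k → ℝ) :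
    r * b * ((B *ᵥ u) ⬝ᵥ (B *ᵥ u)) ≤ (B *ᵥ u) ⬝ᵥ ((B * S * Bᵀ) *ᵥ (B *ᵥ u)) := by
  set w := Bᵀ *ᵥ (B *ᵥ u)
  have hBw : b * (u ⬝ᵥ u) ≤ u ⬝ᵥ w := by simpa only [← mulVec_mulVec] using hB u
  have hBu : (B *ᵥ u) ⬝ᵥ (B *ᵥ u) = u ⬝ᵥ w := by rw [dotProduct_mulVec u, vecMul_transpose]
  have hquad : (B *ᵥ u) ⬝ᵥ ((B * S * Bᵀ) *ᵥ (B *ᵥ u)) = w ⬝ᵥ (S *ᵥ w) := by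
    rw [← mulVec_mulVec, ← mulVec_mulVec, dotProduct_mulVec, ← mulVec_transpose]
  rw [hBu, hquad, mul_assoc]
  exact (mul_le_mul_of_nonneg_left (mul_dotProduct_le_dotProduct_self hb hBw) hr).trans (hS w)

theorem dotProduct_self_eq_norm_sq (v : m → ℝ) : v ⬝ᵥ v = ‖toLp 2 v‖ ^ 2 := by
  rw [← real_inner_self_eq_norm_sq, EuclideanSpace.inner_toLp_toLp, star_trivial]

theorem injective_mulVec_of_mul_dotProduct_self_le {k : Type*} [Fintype k] {B : Matrix m k ℝ}
    {b : ℝ} (hb : 0 < b) (hB : ∀ u, b * (u ⬝ᵥ u) ≤ u ⬝ᵥ ((Bᵀ * B) *ᵥ u)) :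
    Function.Injective B.mulVec := by
  refine (injective_iff_map_eq_zero B.mulVecLin).mpr fun u (hu : B *ᵥ u = 0) => ?_
  have h := hB u
  rw [← mulVec_mulVec, hu, mulVec_zero, dotProduct_zero] at h
  exact dotProduct_self_eq_zero.mp
    (le_antisymm (nonpos_of_mul_nonpos_right h hb) (dotProduct_self_star_nonneg u))

variable [DecidableEq m]

theorem dotProduct_mulVec_eq_inner (A : Matrix m m ℝ) (v : m → ℝ) :
    v ⬝ᵥ (A *ᵥ v) = ⟪toEuclideanLin A (toLp 2 v), toLp 2 v⟫_ℝ := by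
  rw [toLpLin_apply, EuclideanSpace.inner_toLp_toLp, star_trivial]

theorem dotProduct_inv_mulVec_le {A : Matrix m m ℝ} (hA : IsUnit A.det) {s : ℝ} (hs : 0 < s)
    (h : ∀ v, s * (v ⬝ᵥ v) ≤ v ⬝ᵥ (A *ᵥ v)) (w : m → ℝ) :
    w ⬝ᵥ (A⁻¹ *ᵥ w) ≤ s⁻¹ * (w ⬝ᵥ w) := by
  have hw : A *ᵥ (A⁻¹ *ᵥ w) = w := by rw [mulVec_mulVec, mul_nonsing_inv _ hA, one_mulVec]
  have key := mul_dotProduct_le_dotProduct_self hs.le (hw ▸ h (A⁻¹ *ᵥ w))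
  rwa [dotProduct_comm, le_inv_mul_iff₀ hs]

theorem inv_mul_dotProduct_le_dotProduct_inv_mulVec {A : Matrix m m ℝ} (hA : A.PosDef) {t : ℝ}
    (ht : 0 < t) (h : ∀ v, v ⬝ᵥ (A *ᵥ v) ≤ t * (v ⬝ᵥ v)) (w : m → ℝ) :
    t⁻¹ * (w ⬝ᵥ w) ≤ w ⬝ᵥ (A⁻¹ *ᵥ w) := by
  set v := A⁻¹ *ᵥ w
  have hv : A *ᵥ v = w := by
    rw [mulVec_mulVec, mul_nonsing_inv _ ((isUnit_iff_isUnit_det A).mp hA.isUnit), one_mulVec]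
  have hvw : v ⬝ᵥ (A *ᵥ w) = w ⬝ᵥ w := by
    rw [dotProduct_mulVec, ← mulVec_transpose, ← conjTranspose_eq_transpose_of_trivial,
      hA.isHermitian.eq, hv]
  -- the Gram inequality `0 ≤ xᵀ A x` at `x = t v - w`
  have hx := hA.posSemidef.dotProduct_mulVec_nonneg (t • v - w)
  simp only [star_trivial, mulVec_sub, mulVec_smul, hv, sub_dotProduct, dotProduct_sub,
    smul_dotProduct, dotProduct_smul, smul_eq_mul, hvw] at hx
  have := h w
  rw [dotProduct_comm w v, inv_mul_le_iff₀ ht]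
  nlinarith

namespace IsHermitian

variable {A : Matrix m m ℝ} (hA : A.IsHermitian)

theorem eigenvalues₀_eq (j : Fin (Fintype.card m)) :
    hA.eigenvalues₀ j = hA.eigenvalues (Fintype.equivOfCardEq (Fintype.card_fin _) j) := by
  simp [IsHermitian.eigenvalues]

theorem mul_dotProduct_self_le {s : ℝ} (hs : ∀ i, s ≤ hA.eigenvalues i) (v : m → ℝ) :
    s * (v ⬝ᵥ v) ≤ v ⬝ᵥ (A *ᵥ v) := by
  rw [dotProduct_mulVec_eq_inner, dotProduct_self_eq_norm_sq]
  exact (isSymmetric_toEuclideanLin_iff.mpr hA).le_re_inner_apply_self finrank_euclideanSpace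
    (fun j => (hs _).trans_eq (hA.eigenvalues₀_eq j).symm) _

theorem dotProduct_mulVec_le {t : ℝ} (ht : ∀ i, hA.eigenvalues i ≤ t) (v : m → ℝ) :
    v ⬝ᵥ (A *ᵥ v) ≤ t * (v ⬝ᵥ v) := by
  rw [dotProduct_mulVec_eq_inner, dotProduct_self_eq_norm_sq]
  exact (isSymmetric_toEuclideanLin_iff.mpr hA).re_inner_apply_self_le finrank_euclideanSpace
    fun j _ => (hA.eigenvalues₀_eq j).trans_le (ht _)

theorem le_eigenvalues₀_of_le_dotProduct_mulVec (V : Submodule ℝ (m → ℝ))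
    {i : Fin (Fintype.card m)} (hi : (i : ℕ) < finrank ℝ V) {c : ℝ}
    (hc : ∀ v ∈ V, c * (v ⬝ᵥ v) ≤ v ⬝ᵥ (A *ᵥ v)) : c ≤ hA.eigenvalues₀ i := by
  refine (isSymmetric_toEuclideanLin_iff.mpr hA).le_eigenvalues_of_le_re_inner _
    (V.map ((WithLp.linearEquiv 2 ℝ (m → ℝ)).symm : (m → ℝ) →ₗ[ℝ] EuclideanSpace ℝ m))
    (by rwa [LinearEquiv.finrank_map_eq]) ?_
  rintro _ ⟨v, hv, rfl⟩
  simpa [dotProduct_mulVec_eq_inner, dotProduct_self_eq_norm_sq] using hc v hv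

end IsHermitian

end Matrix

theorem lmin_le_eigenvalues {n : ℕ} {A : Matrix (Fin n) (Fin n) ℝ} (hA : A.IsHermitian)
    (i : Fin n) : lmin hA ≤ hA.eigenvalues i :=
  ciInf_le (Finite.bddBelow_range _) i

theorem eigenvalues_le_lmax {n : ℕ} {A : Matrix (Fin n) (Fin n) ℝ} (hA : A.IsHermitian)
    (i : Fin n) : hA.eigenvalues i ≤ lmax hA :=
  le_ciSup (Finite.bddAbove_range _) i

theorem kthEig_eq_eigenvalues₀ {n : ℕ} {A : Matrix (Fin n) (Fin n) ℝ} (hA : A.IsHermitian)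
    {k : ℕ} (hk : 0 < k) (hkn : k ≤ n) :
    kthEig hA k = hA.eigenvalues₀ ⟨k - 1, by rw [Fintype.card_fin]; omega⟩ := by
  have hperm : (List.ofFn hA.eigenvalues).Perm (List.ofFn hA.eigenvalues₀) := by
    rw [← Multiset.coe_eq_coe, ← Fin.univ_val_map, ← Fin.univ_val_map]
    rw [show hA.eigenvalues = hA.eigenvalues₀ ∘ _ from rfl, ← Multiset.map_map,
      Multiset.map_univ_val_equiv]
  have hsort : (List.ofFn hA.eigenvalues).insertionSort (· ≥ ·) = List.ofFn hA.eigenvalues₀ :=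
    ((List.perm_insertionSort _ _).trans hperm).eq_of_sortedGE List.sortedGE_insertionSort
      hA.eigenvalues₀_antitone.sortedGE_ofFn
  rw [kthEig, hsort, List.getD_eq_getElem _ _ (by rw [List.length_ofFn, Fintype.card_fin]; omega),
    List.getElem_ofFn]

theorem le_kthEig_of_injective {M K : ℕ} {A : Matrix (Fin M) (Fin M) ℝ} (hA : A.IsHermitian)
    {B : Matrix (Fin M) (Fin K) ℝ} (hB : Function.Injective B.mulVec) (hK : 0 < K) {c : ℝ}
    (hc : ∀ u, c * ((B *ᵥ u) ⬝ᵥ (B *ᵥ u)) ≤ (B *ᵥ u) ⬝ᵥ (A *ᵥ (B *ᵥ u))) :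
    c ≤ kthEig hA K := by
  have hrank : finrank ℝ (LinearMap.range B.mulVecLin) = K := by
    rw [LinearMap.finrank_range_of_inj hB, finrank_fin_fun]
  have hKM : K ≤ M := hrank ▸ (Submodule.finrank_le _).trans_eq (finrank_fin_fun ℝ)
  rw [kthEig_eq_eigenvalues₀ hA hK hKM]
  exact hA.le_eigenvalues₀_of_le_dotProduct_mulVec (LinearMap.range B.mulVecLin)
    (by simp only [hrank]; omega)
    (by rintro _ ⟨u, rfl⟩; exact hc u)

/-- Under pervasiveness-type bounds, the `K`-th largest eigenvalue of
`B (Σ_Z⁻¹ + AᵀA)⁻¹ Bᵀ` is at least `C·M/p` with `C = κ_{B,1}/(κ_{A,2} + 1/κ_{Z,1})`. -/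
theorem kth_eigenvalue_lower_bound {M K p : ℕ} (hp : 0 < p) (hK : 0 < K)
    (B : Matrix (Fin M) (Fin K) ℝ) (A : Matrix (Fin p) (Fin K) ℝ)
    (SZ : Matrix (Fin K) (Fin K) ℝ) (hSZ : SZ.PosDef) (hSZh : SZ.IsHermitian)
    (κB1 κA2 κZ1 : ℝ) (hκB1 : 0 < κB1) (hκA2 : 0 < κA2) (hκZ1 : 0 < κZ1)
    (hBtB : (Bᵀ * B).IsHermitian)
    (hAtA : (Aᵀ * A).IsHermitian)
    (hSig : (B * (SZ⁻¹ + Aᵀ * A)⁻¹ * Bᵀ).IsHermitian)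
    (hB : κB1 * M ≤ lmin hBtB)
    (hA : lmax hAtA ≤ κA2 * p)
    (hZ : κZ1 ≤ lmin hSZh) :
    (κB1 / (κA2 + 1 / κZ1)) * M / p ≤ kthEig hSig K := by
  rcases Nat.eq_zero_or_pos M with rfl | hM
  · simp [kthEig]
  set b := κB1 * M
  set t := (κA2 + 1 / κZ1) * p
  have hb : 0 < b := by positivity
  have ht : 0 < t := by positivity
  have hBq := hBtB.mul_dotProduct_self_le fun i => hB.trans (lmin_le_eigenvalues hBtB i)
  have hSZinv := dotProduct_inv_mulVec_le ((isUnit_iff_isUnit_det SZ).mp hSZ.isUnit) hκZ1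
    (hSZh.mul_dotProduct_self_le fun i => hZ.trans (lmin_le_eigenvalues hSZh i))
  have hAq := hAtA.dotProduct_mulVec_le fun i => (eigenvalues_le_lmax hAtA i).trans hA
  have hS : ∀ v, v ⬝ᵥ ((SZ⁻¹ + Aᵀ * A) *ᵥ v) ≤ t * (v ⬝ᵥ v) := by
    intro v
    have hvv : κZ1⁻¹ * (v ⬝ᵥ v) ≤ κZ1⁻¹ * p * (v ⬝ᵥ v) :=
      mul_le_mul_of_nonneg_right (le_mul_of_one_le_right (by positivity) (by exact_mod_cast hp))
        (dotProduct_self_star_nonneg v)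
    have ht_expand : t * (v ⬝ᵥ v) = κA2 * p * (v ⬝ᵥ v) + κZ1⁻¹ * p * (v ⬝ᵥ v) := by
      simp only [t]; ring
    rw [add_mulVec, dotProduct_add]
    linarith [hSZinv v, hAq v]
  have hSpd : (SZ⁻¹ + Aᵀ * A).PosDef :=
    hSZ.inv.add_posSemidef (posSemidef_conjTranspose_mul_self A)
  calc κB1 / (κA2 + 1 / κZ1) * M / p = t⁻¹ * b := by simp only [t, b]; field_simp
    _ ≤ kthEig hSig K :=
      le_kthEig_of_injective hSig (injective_mulVec_of_mul_dotProduct_self_le hb hBq) hK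
        (mul_mul_dotProduct_le_dotProduct_mul_mul_transpose_mulVec B hb.le (by positivity) hBq
          (inv_mul_dotProduct_le_dotProduct_inv_mulVec hSpd ht hS))
end

section
/- Let B ∈ ℝ^{M×K}, A ∈ ℝ^{p×K}, and Σ_Z ∈ ℝ^{K×K} symmetric positive definite. Let B_m denote the m-th row of B with ‖B_m‖₂ ≤ C₄, and suppose λ_min(A^T A) ≥ κ_{A,1}·p, λ_max(A^T A) ≤ κ_{A,2}·p, and λ_max(Σ_Z) ≤ κ_{Z,2}. Then ‖B_m Σ_Z A^T (A Σ_Z A^T + I_p)^{-1}‖₂² ≤ C₄²·κ_{A,2}·p / (1/κ_{Z,2} + κ_{A,1}·p)², so this quantity is O(1/p). -/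
/-! With `Q = Σ_Z⁻¹ + AᵀA`, the push-through identity rewrites the bias row as
`w = A u` with `u = B_m Q⁻¹`, so `‖w‖² = uᵀ(AᵀA)u ≤ κ_{A,2} p ‖u‖²`. On the other hand
`uᵀ Q u = B_m · u`, and `Q ≥ (1/κ_{Z,2} + κ_{A,1} p) I` because `Σ_Z ≤ κ_{Z,2} I`; hence
`(1/κ_{Z,2} + κ_{A,1} p) ‖u‖ ≤ ‖B_m‖ ≤ C₄`. -/

open Matrix

noncomputable def l2norm {n : ℕ} (v : Fin n → ℝ) : ℝ := Real.sqrt (∑ i, (v i) ^ 2)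

lemma l2norm_sq {n : ℕ} (v : Fin n → ℝ) : l2norm v ^ 2 = v ⬝ᵥ v := by
  rw [l2norm, Real.sq_sqrt (Finset.sum_nonneg fun i _ => sq_nonneg _)]
  simp only [dotProduct, sq]

lemma sq_mul_dotProduct_self_le_of_mul_le {ι : Type*} [Fintype ι] {α : ℝ} (hα : 0 ≤ α)
    {u v : ι → ℝ} (h : α * (u ⬝ᵥ u) ≤ v ⬝ᵥ u) : α ^ 2 * (u ⬝ᵥ u) ≤ v ⬝ᵥ v := by
  have h0 : 0 ≤ (v - α • u) ⬝ᵥ (v - α • u) := by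
    simpa using dotProduct_self_star_nonneg (v - α • u)
  simp only [sub_dotProduct, dotProduct_sub, smul_dotProduct, dotProduct_smul, smul_eq_mul,
    dotProduct_comm u v] at h0
  nlinarith

lemma Matrix.mul_mul_inv_add_one_eq_inv_add_mul_mul {R m n : Type*} [CommRing R]
    [Fintype m] [Fintype n] [DecidableEq m] [DecidableEq n]
    (S : Matrix n n R) (A : Matrix m n R) (C : Matrix n m R)
    (hS : IsUnit S.det) (hQ : IsUnit (S⁻¹ + C * A).det) (hP : IsUnit (A * S * C + 1).det) :
    S * C * (A * S * C + 1)⁻¹ = (S⁻¹ + C * A)⁻¹ * C := by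
  have hpush : (S⁻¹ + C * A) * (S * C) = C * (A * S * C + 1) := by
    rw [Matrix.add_mul, Matrix.mul_add, ← Matrix.mul_assoc S⁻¹, nonsing_inv_mul S hS,
      Matrix.one_mul, Matrix.mul_one, add_comm]
    simp only [Matrix.mul_assoc]
  calc S * C * (A * S * C + 1)⁻¹
      = (S⁻¹ + C * A)⁻¹ * ((S⁻¹ + C * A) * (S * C)) * (A * S * C + 1)⁻¹ := by
        rw [nonsing_inv_mul_cancel_left _ _ hQ]
    _ = (S⁻¹ + C * A)⁻¹ * C := by
        rw [hpush, ← Matrix.mul_assoc, mul_nonsing_inv_cancel_right _ _ hP]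

section Spectral

variable {ι : Type*} [Fintype ι] [DecidableEq ι]

lemma Matrix.IsHermitian.exists_dotProduct_mulVec_eq_sum_eigenvalues {H : Matrix ι ι ℝ}
    (hH : H.IsHermitian) (x : ι → ℝ) :
    ∃ c : ι → ℝ, x ⬝ᵥ H *ᵥ x = ∑ i, hH.eigenvalues i * c i ^ 2 ∧ x ⬝ᵥ x = ∑ i, c i ^ 2 := by
  set U : Matrix ι ι ℝ := (hH.eigenvectorUnitary : Matrix ι ι ℝ)
  have hUt : star U = Uᵀ := conjTranspose_eq_transpose_of_trivial U
  have hUUt : U * Uᵀ = 1 := hUt ▸ mem_unitaryGroup_iff.mp hH.eigenvectorUnitary.2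
  refine ⟨x ᵥ* U, ?_, ?_⟩
  · conv_lhs => rw [hH.spectral_theorem, Unitary.conjStarAlgAut_apply]
    rw [hUt, ← mulVec_mulVec, ← mulVec_mulVec, mulVec_transpose, dotProduct_mulVec]
    simp only [RCLike.ofReal_real_eq_id, Function.id_comp, dotProduct, mulVec_diagonal]
    exact Finset.sum_congr rfl fun i _ => by ring
  · calc x ⬝ᵥ x = (x ᵥ* (U * Uᵀ)) ⬝ᵥ x := by rw [hUUt, vecMul_one]
      _ = (x ᵥ* U) ⬝ᵥ (x ᵥ* U) := by
        rw [← vecMul_vecMul, ← dotProduct_mulVec, mulVec_transpose]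
      _ = ∑ i, (x ᵥ* U) i ^ 2 := by simp only [dotProduct, sq]

lemma Matrix.PosDef.one_div_mul_dotProduct_self_le {S : Matrix ι ι ℝ} (hS : S.PosDef) {κ : ℝ}
    (hκ : 0 < κ) (hSκ : ∀ x, x ⬝ᵥ S *ᵥ x ≤ κ * (x ⬝ᵥ x)) (x : ι → ℝ) :
    1 / κ * (x ⬝ᵥ x) ≤ x ⬝ᵥ S⁻¹ *ᵥ x := by
  set y := S⁻¹ *ᵥ x
  have hSy : S *ᵥ y = x := by
    rw [mulVec_mulVec, mul_nonsing_inv _ hS.det_pos.ne'.isUnit, one_mulVec]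
  have hySx : y ⬝ᵥ S *ᵥ x = x ⬝ᵥ x := by
    rw [dotProduct_mulVec, ← mulVec_transpose, (isHermitian_iff_isSymm.mp hS.isHermitian).eq, hSy]
  -- positivity of the form at `x - κ y` gives `xᵀSx - 2κ‖x‖² + κ² xᵀy ≥ 0`
  have h0 : 0 ≤ (x - κ • y) ⬝ᵥ S *ᵥ (x - κ • y) := by
    simpa using hS.posSemidef.dotProduct_mulVec_nonneg (x - κ • y)
  simp only [mulVec_sub, mulVec_smul, sub_dotProduct, dotProduct_sub, smul_dotProduct,
    dotProduct_smul, smul_eq_mul, hSy, hySx, dotProduct_comm y x] at h0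
  rw [one_div_mul_eq_div, div_le_iff₀' hκ]
  nlinarith [hSκ x]

end Spectral

section Extremal

variable {n : ℕ} {H : Matrix (Fin n) (Fin n) ℝ} {κ : ℝ}

lemma dotProduct_mulVec_le_of_lmax_le (hH : H.IsHermitian) (hκ : lmax hH ≤ κ) (x : Fin n → ℝ) :
    x ⬝ᵥ H *ᵥ x ≤ κ * (x ⬝ᵥ x) := by
  obtain ⟨c, hquad, hnorm⟩ := hH.exists_dotProduct_mulVec_eq_sum_eigenvalues x
  rw [hquad, hnorm, Finset.mul_sum]
  gcongr with i
  exact (le_ciSup (Set.finite_range _).bddAbove i).trans hκ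

lemma mul_dotProduct_self_le_of_le_lmin (hH : H.IsHermitian) (hκ : κ ≤ lmin hH)
    (x : Fin n → ℝ) : κ * (x ⬝ᵥ x) ≤ x ⬝ᵥ H *ᵥ x := by
  obtain ⟨c, hquad, hnorm⟩ := hH.exists_dotProduct_mulVec_eq_sum_eigenvalues x
  rw [hquad, hnorm, Finset.mul_sum]
  gcongr with i
  exact hκ.trans (ciInf_le (Set.finite_range _).bddBelow i)

end Extremal

lemma l2norm_mulVec_sq {m n : ℕ} (A : Matrix (Fin m) (Fin n) ℝ) (u : Fin n → ℝ) :
    l2norm (A *ᵥ u) ^ 2 = u ⬝ᵥ (Aᵀ * A) *ᵥ u := by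
  rw [l2norm_sq, dotProduct_mulVec, ← vecMul_transpose, vecMul_vecMul, ← dotProduct_mulVec]

theorem first_order_bias_row_bound_general {M K p : ℕ}
    (B : Matrix (Fin M) (Fin K) ℝ) (A : Matrix (Fin p) (Fin K) ℝ)
    (SZ : Matrix (Fin K) (Fin K) ℝ) (hSZ : SZ.PosDef) (hSZh : SZ.IsHermitian)
    (m : Fin M) (C₄ κA1 κA2 κZ2 : ℝ)
    (hκA1 : 0 < κA1) (hκA2 : 0 < κA2) (hκZ2 : 0 < κZ2)
    (hrow : l2norm (B m) ≤ C₄)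
    (hAtA : (Aᵀ * A).IsHermitian)
    (hmin : κA1 * p ≤ lmin hAtA)
    (hmax : lmax hAtA ≤ κA2 * p)
    (hZ : lmax hSZh ≤ κZ2) :
    (l2norm (Matrix.vecMul (B m) (SZ * Aᵀ * (A * SZ * Aᵀ + 1)⁻¹))) ^ 2
      ≤ C₄ ^ 2 * κA2 * p / (1 / κZ2 + κA1 * p) ^ 2 := by
  set Q := SZ⁻¹ + Aᵀ * A
  set u := B m ᵥ* Q⁻¹
  have hQ : Q.PosDef := hSZ.inv.add_posSemidef (by simpa using posSemidef_conjTranspose_mul_self A)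
  have hP : (A * SZ * Aᵀ + 1).PosDef :=
    .posSemidef_add (by simpa using hSZ.posSemidef.mul_mul_conjTranspose_same A) .one
  have hw : B m ᵥ* (SZ * Aᵀ * (A * SZ * Aᵀ + 1)⁻¹) = A *ᵥ u := by
    rw [mul_mul_inv_add_one_eq_inv_add_mul_mul SZ A Aᵀ hSZ.det_pos.ne'.isUnit
      hQ.det_pos.ne'.isUnit hP.det_pos.ne'.isUnit, ← vecMul_vecMul, vecMul_transpose]
  have hQu : u ⬝ᵥ Q *ᵥ u = B m ⬝ᵥ u := by
    rw [dotProduct_mulVec, vecMul_vecMul, nonsing_inv_mul _ hQ.det_pos.ne'.isUnit, vecMul_one]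
  have hlow : (1 / κZ2 + κA1 * p) * (u ⬝ᵥ u) ≤ B m ⬝ᵥ u := by
    rw [← hQu, add_mulVec, dotProduct_add, add_mul]
    exact add_le_add
      (hSZ.one_div_mul_dotProduct_self_le hκZ2 (dotProduct_mulVec_le_of_lmax_le hSZh hZ) u)
      (mul_dotProduct_self_le_of_le_lmin hAtA hmin u)
  have hu : (1 / κZ2 + κA1 * p) ^ 2 * (u ⬝ᵥ u) ≤ C₄ ^ 2 :=
    (sq_mul_dotProduct_self_le_of_mul_le (by positivity) hlow).trans
      (l2norm_sq (B m) ▸ pow_le_pow_left₀ (Real.sqrt_nonneg _) hrow 2)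
  rw [hw, l2norm_mulVec_sq, le_div_iff₀ (by positivity)]
  calc u ⬝ᵥ (Aᵀ * A) *ᵥ u * (1 / κZ2 + κA1 * p) ^ 2
      ≤ κA2 * p * ((1 / κZ2 + κA1 * p) ^ 2 * (u ⬝ᵥ u)) := by
        nlinarith [dotProduct_mulVec_le_of_lmax_le hAtA hmax u]
    _ ≤ κA2 * p * C₄ ^ 2 := by gcongr
    _ = C₄ ^ 2 * κA2 * p := by ring

/-- Bound on the squared `L₂` norm of the first-order bias term
`B_m Σ_Z Aᵀ (A Σ_Z Aᵀ + I)⁻¹`, which is `O(1/p)`. -/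
theorem first_order_bias_row_bound {M K p : ℕ} (hp : 0 < p) (hK : 0 < K)
    (B : Matrix (Fin M) (Fin K) ℝ) (A : Matrix (Fin p) (Fin K) ℝ)
    (SZ : Matrix (Fin K) (Fin K) ℝ) (hSZ : SZ.PosDef) (hSZh : SZ.IsHermitian)
    (m : Fin M) (C₄ κA1 κA2 κZ2 : ℝ)
    (hC₄ : 0 < C₄) (hκA1 : 0 < κA1) (hκA2 : 0 < κA2) (hκZ2 : 0 < κZ2)
    (hrow : l2norm (B m) ≤ C₄)
    (hAtA : (Aᵀ * A).IsHermitian)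
    (hmin : κA1 * p ≤ lmin hAtA)
    (hmax : lmax hAtA ≤ κA2 * p)
    (hZ : lmax hSZh ≤ κZ2) :
    (l2norm (Matrix.vecMul (B m) (SZ * Aᵀ * (A * SZ * Aᵀ + 1)⁻¹))) ^ 2
      ≤ C₄ ^ 2 * κA2 * p / (1 / κZ2 + κA1 * p) ^ 2 :=
  first_order_bias_row_bound_general B A SZ hSZ hSZh m C₄ κA1 κA2 κZ2 hκA1 hκA2 hκZ2 hrow hAtA hmin
    hmax hZ
end
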